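/- arXiv:2604.16217 — 2 statements merged into one kernel-verified Lean document; each statement's English description precedes it below -/
import Mathlib

section
/- Let (S_1, …, S_{N+1}) be a random vector with values in ℝ ∪ {∞} whose joint law is invariant under every permutation of the coordinates, and let 1 ≤ k ≤ N+1. Let Q denote the k-th smallest value of the full sample {S_1, …, S_{N+1}} (a random variable, since the order statistic is a symmetric measurable function of the sample). Then P(S_{N+1} ≤ Q) ≥ k/(N+1). -/
/-!
At least `k` coordinates of the sample lie at or below its `k`-th order statistic `Q`, so the
probabilities of the events `{S_i ≤ Q}` add up to at least `k`. Since `Q` is a symmetric function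
of the sample, exchangeability makes all these probabilities equal, so each is at least
`k / (N + 1)`. Measurability of `Q` comes from the min-max formula `Q = min_{|A| = k} max_{i ∈ A} S_i`.
-/

open MeasureTheory

/-- A random vector `S = (S_1, …, S_n)` on a probability space is *exchangeable* if its
joint law (the pushforward measure on the product space) is invariant under every
permutation of the coordinates. -/
def Exchangeable {Ω : Type*} [MeasurableSpace Ω] {E : Type*} [MeasurableSpace E] {n : ℕ}
    (P : Measure Ω) (Z : Ω → Fin n → E) : Prop :=
  ∀ σ : Equiv.Perm (Fin n), Measure.map (fun ω => Z ω ∘ σ) P = Measure.map Z P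

/-- The `k`-th smallest value (k-th order statistic, `1 ≤ k ≤ n`) of the multiset
`{s 1, …, s n}` of extended-real values: the entry at position `k` (counted with
multiplicity) when the values are sorted in nondecreasing order. -/
noncomputable def orderStat {n : ℕ} (s : Fin n → EReal) (k : ℕ) : EReal :=
  ((Multiset.map s Finset.univ.val).sort (· ≤ ·)).getD (k - 1) ⊤

open Finset

section OrderStatistic

variable {n : ℕ}

theorem orderStat_comp_perm (s : Fin n → EReal) (σ : Equiv.Perm (Fin n)) (k : ℕ) :
    orderStat (s ∘ σ) k = orderStat s k := by
  rw [orderStat, orderStat, ← Multiset.map_map, Multiset.map_univ_val_equiv]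

theorem Monotone.orderStat_succ {t : Fin n → EReal} (ht : Monotone t) (j : Fin n) :
    orderStat t (j + 1) = t j := by
  rw [orderStat, Fin.univ_val_map, Multiset.coe_sort,
    List.mergeSort_eq_self _ ht.sortedLE_ofFn.pairwise]
  simp

theorem orderStat_succ_eq_sort_apply (s : Fin n → EReal) (j : Fin n) :
    orderStat s (j + 1) = s (Tuple.sort s j) := by
  rw [← orderStat_comp_perm s (Tuple.sort s), (Tuple.monotone_sort s).orderStat_succ]
  rfl

theorem card_filter_perm {α : Type*} [Fintype α] (p : α → Prop) [DecidablePred p]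
    (σ : Equiv.Perm α) : #{i | p (σ i)} = #{i | p i} :=
  card_equiv σ (by simp)

theorem lt_card_filter_le_orderStat (s : Fin n → EReal) (j : Fin n) :
    (j : ℕ) < #{i | s i ≤ orderStat s (j + 1)} := by
  rw [orderStat_succ_eq_sort_apply, ← card_filter_perm _ (Tuple.sort s)]
  exact (Tuple.lt_card_le_iff_apply_le_of_monotone (Tuple.monotone_sort s)).2 le_rfl

theorem card_filter_lt_orderStat_le (s : Fin n → EReal) (j : Fin n) :
    #{i | s i < orderStat s (j + 1)} ≤ j := by
  rw [orderStat_succ_eq_sort_apply, ← card_filter_perm _ (Tuple.sort s)]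
  by_contra! h
  exact lt_irrefl _ ((Tuple.lt_card_lt_iff_apply_lt_of_monotone (Tuple.monotone_sort s)).1 h)

theorem orderStat_eq_inf_sup (s : Fin n → EReal) (j : Fin n) :
    orderStat s (j + 1) = (univ.powersetCard (j + 1)).inf fun A => A.sup s := by
  refine le_antisymm (Finset.le_inf fun A hA => ?_) ?_
  · by_contra! hlt
    have hsub : A ⊆ ({i | s i < orderStat s (j + 1)} : Finset (Fin n)) := fun i hi =>
      mem_filter.2 ⟨mem_univ i, (Finset.le_sup hi).trans_lt hlt⟩
    have := (card_le_card hsub).trans (card_filter_lt_orderStat_le s j)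
    rw [(mem_powersetCard.1 hA).2] at this
    omega
  · obtain ⟨A, hA, hcard⟩ := exists_subset_card_eq (lt_card_filter_le_orderStat s j)
    exact (inf_le (mem_powersetCard.2 ⟨subset_univ A, hcard⟩)).trans
      (Finset.sup_le fun i hi => (mem_filter.1 (hA hi)).2)

theorem measurable_orderStat (j : Fin n) :
    Measurable fun s : Fin n → EReal => orderStat s (j + 1) := by
  simp_rw [orderStat_eq_inf_sup, Finset.inf_eq_iInf, Finset.sup_eq_iSup]
  exact Measurable.biInf _ (Set.to_countable _) fun A _ =>
    Measurable.biSup _ (Set.to_countable _) fun i _ => measurable_pi_apply i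

end OrderStatistic

theorem Exchangeable.measure_preimage_comp_perm {Ω E : Type*} [MeasurableSpace Ω]
    [MeasurableSpace E] {n : ℕ} {P : Measure Ω} {Z : Ω → Fin n → E} (h : Exchangeable P Z)
    (hZ : Measurable Z) (σ : Equiv.Perm (Fin n)) {T : Set (Fin n → E)} (hT : MeasurableSet T) :
    P ((fun ω => Z ω ∘ σ) ⁻¹' T) = P (Z ⁻¹' T) := by
  have hZσ : Measurable fun ω => Z ω ∘ σ :=
    measurable_pi_lambda _ fun i => (measurable_pi_apply (σ i)).comp hZ
  rw [← Measure.map_apply hZσ hT, h σ, Measure.map_apply hZ hT]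

open Classical in
theorem MeasureTheory.natCast_mul_measure_univ_le_sum {α ι : Type*} [MeasurableSpace α]
    (μ : Measure α) (s : Finset ι) {A : ι → Set α} (hA : ∀ i ∈ s, MeasurableSet (A i)) {k : ℕ}
    (hk : ∀ x, k ≤ #{i ∈ s | x ∈ A i}) :
    k * μ Set.univ ≤ ∑ i ∈ s, μ (A i) :=
  calc k * μ Set.univ = ∫⁻ _, (k : ENNReal) ∂μ := (lintegral_const _).symm
    _ ≤ ∫⁻ x, ∑ i ∈ s, (A i).indicator 1 x ∂μ := lintegral_mono fun x => by
        simpa [Set.indicator_apply, Finset.sum_boole] using hk x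
    _ = ∑ i ∈ s, μ (A i) := by
        rw [lintegral_finsetSum' s fun i hi => (measurable_one.indicator (hA i hi)).aemeasurable]
        exact sum_congr rfl fun i hi => lintegral_indicator_one (hA i hi)

/-- Let `(S_1, …, S_{N+1})` be an exchangeable random vector of
extended-real scores and `1 ≤ k ≤ N+1`. Let `Q` be the `k`-th smallest value of the
full sample `{S_1, …, S_{N+1}}`. Then `P(S_{N+1} ≤ Q) ≥ k / (N+1)`. -/
theorem exchangeable_orderStat_coverage {Ω : Type*} [MeasurableSpace Ω]
    (P : Measure Ω) [IsProbabilityMeasure P] (N : ℕ)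
    (S : Ω → Fin (N + 1) → EReal) (hS : Measurable S)
    (hexch : Exchangeable P S)
    (k : ℕ) (hk1 : 1 ≤ k) (hk2 : k ≤ N + 1) :
    (k : ENNReal) / ((N : ENNReal) + 1) ≤
      P {ω | S ω (Fin.last N) ≤ orderStat (S ω) k} := by
  classical
  obtain ⟨j, rfl⟩ : ∃ j : Fin (N + 1), k = j + 1 := ⟨⟨k - 1, by omega⟩, by simp; omega⟩
  let T : Fin (N + 1) → Set (Fin (N + 1) → EReal) := fun i => {x | x i ≤ orderStat x (j + 1)}
  have hT : ∀ i, MeasurableSet (T i) := fun i =>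
    measurableSet_le (measurable_pi_apply i) (measurable_orderStat j)
  have hcover : ∀ ω, (j : ℕ) + 1 ≤ #{i ∈ univ | ω ∈ S ⁻¹' T i} := fun ω => by
    simpa [T, Nat.succ_le_iff] using lt_card_filter_le_orderStat (S ω) j
  have hsame : ∀ i, P (S ⁻¹' T i) = P (S ⁻¹' T (Fin.last N)) := fun i => by
    simpa [T, orderStat_comp_perm] using
      (hexch.measure_preimage_comp_perm hS (Equiv.swap i (Fin.last N)) (hT (Fin.last N)))
  have hsum := natCast_mul_measure_univ_le_sum P univ (fun i _ => hS (hT i)) hcover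
  rw [measure_univ, mul_one, sum_congr rfl fun i _ => hsame i, sum_const, card_univ,
    Fintype.card_fin, nsmul_eq_mul] at hsum
  rw [ENNReal.div_le_iff (by simp) (by simp), mul_comm]
  exact_mod_cast hsum
end

section
/- Let α ∈ (0,1), let (S_1, …, S_{N+1}) be a random vector with values in ℝ ∪ {∞} whose joint law is invariant under every permutation of the coordinates, set k = ⌈(N+1)(1−α)⌉, and define the split conformal threshold q̂_α as the k-th smallest value of the multiset {S_1, …, S_N, ∞}. Then P(S_{N+1} ≤ q̂_α) ≥ k/(N+1) ≥ 1 − α. -/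
open MeasureTheory Finset

section aux
open List

lemma sorted_get_le_iff' {L : List EReal} (hL : L.Pairwise (· ≤ ·))
    {p : ℕ} (hp : p < L.length) (x : EReal) :
    x ≤ L.get ⟨p, hp⟩ ↔ L.countP (fun y => decide (y < x)) ≤ p := by
  constructor
  · intro h
    have hsplit := List.take_append_drop p L
    have hcount : L.countP (fun y => decide (y < x)) =
        (L.take p).countP (fun y => decide (y < x)) +
        (L.drop p).countP (fun y => decide (y < x)) := by
      conv_lhs => rw [← hsplit]
      exact List.countP_append
    have hdrop : (L.drop p).countP (fun y => decide (y < x)) = 0 := by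
      rw [List.countP_eq_zero]
      intro a ha
      obtain ⟨i, hi⟩ := List.mem_iff_get.mp ha
      have : a = L.get ⟨p + i.1, by have := i.2; simp [List.length_drop] at this; omega⟩ := by
        rw [← hi]; simp [List.getElem_drop]
      have hle : L.get ⟨p, hp⟩ ≤ a := by
        rw [this]; exact hL.rel_get_of_le (by simp)
      simp only [decide_eq_true_eq]
      exact not_lt.mpr (le_trans h hle)
    have htake : (L.take p).countP (fun y => decide (y < x)) ≤ p := by
      calc _ ≤ (L.take p).length := List.countP_le_length
        _ ≤ p := by simp [List.length_take]
    omega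
  · intro h
    by_contra hlt
    push_neg at hlt
    have hall : ∀ a ∈ L.take (p+1), decide (a < x) = true := by
      intro a ha
      obtain ⟨i, hi⟩ := List.mem_iff_get.mp ha
      have hi2 : i.1 < p + 1 := by have := i.2; simp [List.length_take] at this; omega
      have : a = L.get ⟨i.1, lt_of_lt_of_le hi2 hp⟩ := by
        rw [← hi]; simp
      have hle : L.get ⟨i.1, lt_of_lt_of_le hi2 hp⟩ ≤ L.get ⟨p, hp⟩ :=
        hL.rel_get_of_le (by simp; omega)
      simp only [decide_eq_true_eq]
      rw [this]; exact lt_of_le_of_lt hle hlt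
    have htake : (L.take (p+1)).countP (fun y => decide (y < x)) = p + 1 := by
      rw [List.countP_eq_length.mpr hall, List.length_take]
      simp; omega
    have : p + 1 ≤ L.countP (fun y => decide (y < x)) := by
      conv_rhs => rw [← List.take_append_drop (p+1) L, List.countP_append]
      omega
    omega

lemma countP_sort_eq' {n : ℕ} (t : Fin n → EReal) (x : EReal) :
    ((Multiset.map t Finset.univ.val).sort (· ≤ ·)).countP (fun y => decide (y < x))
      = (Finset.univ.filter (fun j => t j < x)).card := by
  have h1 : (((Multiset.map t Finset.univ.val).sort (· ≤ ·) : List EReal) : Multiset EReal).countP (· < x)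
      = (Multiset.map t Finset.univ.val).countP (· < x) := by
    rw [Multiset.sort_eq]
  rw [Multiset.coe_countP] at h1
  rw [h1, Multiset.countP_map]
  rfl

lemma orderStat_eq_get {n : ℕ} (t : Fin (n+1) → EReal) {k : ℕ} (hk2 : k ≤ n+1)
    (h : (k-1) < ((Multiset.map t Finset.univ.val).sort (· ≤ ·)).length) :
    orderStat t k = ((Multiset.map t Finset.univ.val).sort (· ≤ ·)).get ⟨k-1, h⟩ :=
  List.getD_eq_get (i := ⟨k-1, h⟩) ..

lemma event_iff' {n : ℕ} (s : Fin (n+1) → EReal) (i : Fin (n+1)) {k : ℕ}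
    (hk1 : 1 ≤ k) (hk2 : k ≤ n+1) :
    s i ≤ orderStat (Function.update s i ⊤) k ↔
      (Finset.univ.filter (fun j => s j < s i)).card < k := by
  set t := Function.update s i ⊤ with ht
  have hlen : ((Multiset.map t Finset.univ.val).sort (· ≤ ·)).length = n + 1 := by
    simp [Multiset.length_sort]
  have hpk : k - 1 < ((Multiset.map t Finset.univ.val).sort (· ≤ ·)).length := by omega
  rw [orderStat_eq_get t hk2 hpk,
    sorted_get_le_iff' (Multiset.pairwise_sort _ _) hpk, countP_sort_eq']
  have hfe : (Finset.univ.filter (fun j => t j < s i)) = (Finset.univ.filter (fun j => s j < s i)) := by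
    apply Finset.filter_congr
    intro j _
    by_cases hj : j = i
    · subst hj; simp [ht, Function.update_self]
    · simp [ht, Function.update_of_ne hj]
  rw [hfe]
  omega

lemma card_event_ge' {n : ℕ} (s : Fin (n+1) → EReal) {k : ℕ} (hk1 : 1 ≤ k) (hk2 : k ≤ n+1) :
    k ≤ (Finset.univ.filter
      (fun i => (Finset.univ.filter (fun j => s j < s i)).card < k)).card := by
  set L := (Multiset.map s Finset.univ.val).sort (· ≤ ·) with hL
  have hlen : L.length = n + 1 := by simp [hL, Multiset.length_sort]
  have hpk : k - 1 < L.length := by omega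
  set v := L.get ⟨k-1, hpk⟩ with hv
  have hiff : ∀ i, ((Finset.univ.filter (fun j => s j < s i)).card < k ↔ s i ≤ v) := by
    intro i
    rw [hv, sorted_get_le_iff' (Multiset.pairwise_sort _ _) hpk, ← hL, countP_sort_eq']
    omega
  have hfe : (Finset.univ.filter
      (fun i => (Finset.univ.filter (fun j => s j < s i)).card < k))
      = Finset.univ.filter (fun i => s i ≤ v) := by
    apply Finset.filter_congr; intro i _; simpa using hiff i
  rw [hfe]
  -- card of {i : s i ≤ v} = countP (· ≤ v) L ≥ k
  have hcount : (Finset.univ.filter (fun i => s i ≤ v)).card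
      = L.countP (fun y => decide (y ≤ v)) := by
    have h1 : ((L : Multiset EReal)).countP (· ≤ v)
        = (Multiset.map s Finset.univ.val).countP (· ≤ v) := by rw [hL, Multiset.sort_eq]
    rw [Multiset.coe_countP] at h1
    rw [h1, Multiset.countP_map]
    rfl
  rw [hcount]
  -- first k elements of L are ≤ v
  have hall : ∀ a ∈ L.take k, decide (a ≤ v) = true := by
    intro a ha
    obtain ⟨q, hq⟩ := List.mem_iff_get.mp ha
    have hq2 : q.1 < k := by have := q.2; simp [List.length_take] at this; omega
    have ha2 : a = L.get ⟨q.1, by omega⟩ := by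
      rw [← hq]; simp
    have : L.get ⟨q.1, by omega⟩ ≤ v := by
      rw [hv]; exact (Multiset.pairwise_sort _ _).rel_get_of_le (by simp; omega)
    simp only [decide_eq_true_eq]; rw [ha2]; exact this
  have htake : (L.take k).countP (fun y => decide (y ≤ v)) = k := by
    rw [List.countP_eq_length.mpr hall, List.length_take]; simp; omega
  conv_rhs => rw [← List.take_append_drop k L, List.countP_append]
  omega

end aux

/-- **split conformal coverage.** Let `α ∈ (0,1)`, let `(S_1, …, S_{N+1})`
be an exchangeable random vector of extended-real scores, set `k = ⌈(N+1)(1-α)⌉`, and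
let the split conformal threshold `q̂_α` be the `k`-th smallest value of the multiset
`{S_1, …, S_N, ∞}` (the last entry replaced by `∞`). Then
`P(S_{N+1} ≤ q̂_α) ≥ k/(N+1) ≥ 1 - α`. -/
theorem split_conformal_coverage {Ω : Type*} [MeasurableSpace Ω]
    (P : Measure Ω) [IsProbabilityMeasure P] (N : ℕ)
    (S : Ω → Fin (N + 1) → EReal) (hS : Measurable S)
    (hexch : Exchangeable P S)
    (α : ℝ) (hα : α ∈ Set.Ioo (0 : ℝ) 1)
    (k : ℕ) (hk : k = ⌈((N : ℝ) + 1) * (1 - α)⌉₊) :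
    ENNReal.ofReal (1 - α) ≤ (k : ENNReal) / ((N : ENNReal) + 1) ∧
      (k : ENNReal) / ((N : ENNReal) + 1) ≤
        P {ω | S ω (Fin.last N) ≤
            orderStat (Function.update (S ω) (Fin.last N) ⊤) k} := by
  obtain ⟨hα0, hα1⟩ := hα
  have hx0 : (0:ℝ) < ((N:ℝ) + 1) * (1 - α) := mul_pos (by positivity) (by linarith)
  have hk1 : 1 ≤ k := by rw [hk]; exact Nat.ceil_pos.mpr hx0
  have hk2 : k ≤ N + 1 := by
    rw [hk, Nat.ceil_le]
    push_cast
    nlinarith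
  -- first inequality
  have hfirst : ENNReal.ofReal (1 - α) ≤ (k : ENNReal) / ((N : ENNReal) + 1) := by
    rw [ENNReal.le_div_iff_mul_le (Or.inl (by simp)) (Or.inl (by simp))]
    have : ((N : ENNReal) + 1) = ENNReal.ofReal ((N:ℝ) + 1) := by
      rw [ENNReal.ofReal_add (Nat.cast_nonneg N) zero_le_one]
      simp [ENNReal.ofReal_natCast]
    rw [this, ← ENNReal.ofReal_mul (by linarith)]
    have hkk : (k : ENNReal) = ENNReal.ofReal (k : ℝ) := by simp
    rw [hkk]
    apply ENNReal.ofReal_le_ofReal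
    rw [mul_comm]
    calc ((N:ℝ) + 1) * (1 - α) ≤ (⌈((N : ℝ) + 1) * (1 - α)⌉₊ : ℝ) := Nat.le_ceil _
      _ = (k : ℝ) := by rw [hk]
  refine ⟨hfirst, ?_⟩
  -- the events
  set A : Fin (N+1) → Set Ω :=
    fun i => {ω | (Finset.univ.filter (fun j => S ω j < S ω i)).card < k} with hA
  -- measurability
  have hcnt : ∀ i : Fin (N+1), Measurable
      (fun s : Fin (N+1) → EReal => (Finset.univ.filter (fun j => s j < s i)).card) := by
    intro i
    have : (fun s : Fin (N+1) → EReal => (Finset.univ.filter (fun j => s j < s i)).card)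
        = fun s => ∑ j : Fin (N+1), if s j < s i then 1 else 0 := by
      funext s; exact Finset.card_filter _ _
    rw [this]
    apply Finset.measurable_sum
    intro j _
    exact Measurable.ite (measurableSet_lt (measurable_pi_apply j) (measurable_pi_apply i))
      measurable_const measurable_const
  have hB : ∀ i : Fin (N+1), MeasurableSet
      {s : Fin (N+1) → EReal | (Finset.univ.filter (fun j => s j < s i)).card < k} :=
    fun i => (hcnt i) measurableSet_Iio
  have hAmeas : ∀ i, MeasurableSet (A i) := fun i => hS (hB i)
  -- exchangeability : all events have equal probability
  have hPA : ∀ i : Fin (N+1), P (A i) = P (A (Fin.last N)) := by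
    intro i
    set σ : Equiv.Perm (Fin (N+1)) := Equiv.swap i (Fin.last N) with hσ
    have hσlast : σ (Fin.last N) = i := by simp [hσ, Equiv.swap_apply_right]
    have hmap := hexch σ
    have hmeas2 : Measurable (fun ω => S ω ∘ σ) := by
      apply measurable_pi_lambda
      intro j
      exact (measurable_pi_apply (σ j)).comp hS
    have h1 : P (A i) = Measure.map (fun ω => S ω ∘ σ) P
        {s : Fin (N+1) → EReal | (Finset.univ.filter (fun j => s j < s (Fin.last N))).card < k} := by
      rw [Measure.map_apply hmeas2 (hB (Fin.last N))]
      have hcard_perm : ∀ ω : Ω, (Finset.univ.filter (fun j => S ω (σ j) < S ω i)).card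
          = (Finset.univ.filter (fun j => S ω j < S ω i)).card := by
        intro ω
        apply Finset.card_bij' (fun a _ => σ a) (fun b _ => σ.symm b) <;>
          intro a ha <;> simp_all
      congr 1
      ext ω
      simp only [Set.mem_preimage, Set.mem_setOf_eq, hA, Function.comp_apply, hσlast]
      rw [hcard_perm ω]
    have h2 : Measure.map S P
        {s : Fin (N+1) → EReal | (Finset.univ.filter (fun j => s j < s (Fin.last N))).card < k}
        = P (A (Fin.last N)) := by
      rw [Measure.map_apply hS (hB (Fin.last N))]
      rfl
    rw [h1, hmap, h2]
  -- sum of indicator ≥ k pointwise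
  have hpoint : ∀ ω, (k : ENNReal) ≤ ∑ i : Fin (N+1), (A i).indicator (fun _ => (1:ENNReal)) ω := by
    intro ω
    have hcard := card_event_ge' (S ω) hk1 hk2
    have : ∑ i : Fin (N+1), (A i).indicator (fun _ => (1:ENNReal)) ω
        = ((Finset.univ.filter (fun i : Fin (N+1) =>
            (Finset.univ.filter (fun j => S ω j < S ω i)).card < k)).card : ENNReal) := by
      rw [Finset.card_filter]
      push_cast
      apply Finset.sum_congr rfl
      intro i _
      by_cases h : ω ∈ A i
      · simp only [Set.indicator_of_mem h]
        simp only [hA, Set.mem_setOf_eq] at h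
        simp [h]
      · simp only [Set.indicator_of_notMem h]
        simp only [hA, Set.mem_setOf_eq] at h
        simp [h]
    rw [this]
    exact_mod_cast hcard
  -- integrate
  have hsum : (k : ENNReal) ≤ ∑ i : Fin (N+1), P (A i) := by
    have h1 : ∑ i : Fin (N+1), P (A i)
        = ∫⁻ ω, ∑ i : Fin (N+1), (A i).indicator (fun _ => (1:ENNReal)) ω ∂P := by
      rw [lintegral_finset_sum]
      · apply Finset.sum_congr rfl
        intro i _
        exact (lintegral_indicator_one (hAmeas i)).symm
      · intro i _
        exact (measurable_const.indicator (hAmeas i))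
    rw [h1]
    calc (k : ENNReal) = ∫⁻ _, (k : ENNReal) ∂P := by simp
      _ ≤ _ := lintegral_mono hpoint
  have hsum2 : ∑ i : Fin (N+1), P (A i) = ((N:ENNReal) + 1) * P (A (Fin.last N)) := by
    rw [Finset.sum_congr rfl (fun i _ => hPA i), Finset.sum_const, Finset.card_univ,
      Fintype.card_fin, nsmul_eq_mul]
    push_cast
    ring
  have hmain : (k : ENNReal) / ((N : ENNReal) + 1) ≤ P (A (Fin.last N)) := by
    rw [ENNReal.div_le_iff_le_mul (Or.inl (by simp)) (Or.inl (by simp))]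
    rw [mul_comm]
    rw [← hsum2]
    exact hsum
  have hev : {ω | S ω (Fin.last N) ≤ orderStat (Function.update (S ω) (Fin.last N) ⊤) k}
      = A (Fin.last N) := by
    ext ω
    simp only [Set.mem_setOf_eq, hA]
    exact event_iff' (S ω) (Fin.last N) hk1 hk2
  rw [hev]
  exact hmain
end
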